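/- arXiv:1707.01283 — 6 statements merged into one kernel-verified Lean document; each statement's English description precedes it below -/
import Mathlib

section
/- Let G be a finite directed acyclic graph on n vertices (a binary relation on the vertex set whose transitive closure is irreflexive) in which every vertex has at most d_m parents, i.e. in-degree at most d_m. Then the vertex set V admits a causal cut: there exist pairwise disjoint subsets C, V1, V2 with C ∪ V1 ∪ V2 = V such that no edge of G joins a vertex of V1 and a vertex of V2 in either direction, and moreover |V1| ≥ ⌊n/(2·d_m+2)⌋ and |V2| ≥ ⌊n/(2·d_m+2)⌋. -/
/-!
Every nonempty set of vertices of a finite DAG contains a sink, so adding sinks one at a time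
gives, for `k = ⌊n/(2d+2)⌋`, a set `V₂` of `k` vertices that no edge leaves. Put into `C` the
at most `k d` parents of `V₂` lying outside it; then no edge joins `V₂` to the remaining
vertices `V₁`, and `|V₁| ≥ n - k(d+1) ≥ k(d+1) ≥ k`.
-/

open Finset Relation

namespace CausalCut

variable {V : Type*} [Fintype V] {E : V → V → Prop}

def IsSuccClosed (E : V → V → Prop) (S : Finset V) : Prop :=
  ∀ u ∈ S, ∀ v, E u v → v ∈ S

noncomputable def inBoundary (E : V → V → Prop) (S : Finset V) : Finset V := by
  classical exact univ.filter fun u => u ∉ S ∧ ∃ v ∈ S, E u v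

theorem mem_inBoundary {S : Finset V} {u : V} :
    u ∈ inBoundary E S ↔ u ∉ S ∧ ∃ v ∈ S, E u v := by
  classical simp [inBoundary]

omit [Fintype V] in
theorem exists_sink_of_acyclic [Finite V] (hacyc : ∀ v, ¬ TransGen E v v)
    (T : Set V) (hT : T.Nonempty) : ∃ a ∈ T, ∀ b ∈ T, ¬ E a b := by
  have : IsTrans V (flip (TransGen E)) := ⟨fun _ _ _ hab hbc => TransGen.trans hbc hab⟩
  have : Std.Irrefl (flip (TransGen E)) := ⟨hacyc⟩
  obtain ⟨a, haT, ha⟩ := (Finite.wellFounded_of_trans_of_irrefl (flip (TransGen E))).has_min T hT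
  exact ⟨a, haT, fun b hb hab => ha b hb (TransGen.single hab)⟩

theorem exists_isSuccClosed_card_eq [DecidableEq V] (hacyc : ∀ v, ¬ TransGen E v v) :
    ∀ k ≤ Fintype.card V, ∃ S : Finset V, IsSuccClosed E S ∧ S.card = k
  | 0, _ => ⟨∅, by simp [IsSuccClosed]⟩
  | k + 1, hk => by
    obtain ⟨S, hS, hcard⟩ := exists_isSuccClosed_card_eq hacyc k (by omega)
    have hcompl : (↑S : Set V)ᶜ.Nonempty :=
      Set.nonempty_compl.2 fun h => (card_lt_iff_ne_univ S).1 (by omega) (coe_eq_univ.1 h)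
    -- adding a sink of the complement keeps `S` closed
    obtain ⟨a, haS, ha⟩ := exists_sink_of_acyclic hacyc _ hcompl
    refine ⟨insert a S, ?_, by rw [card_insert_of_notMem haS, hcard]⟩
    intro u hu v huv
    rcases mem_insert.1 hu with rfl | hu
    · exact mem_insert_of_mem (not_not.1 fun hv => ha v hv huv)
    · exact mem_insert_of_mem (hS u hu v huv)

theorem card_inBoundary_le {d : ℕ} (hdeg : ∀ v, {u | E u v}.ncard ≤ d) (S : Finset V) :
    (inBoundary E S).card ≤ S.card * d := by
  classical
  calc (inBoundary E S).card ≤ (S.biUnion fun v => univ.filter (E · v)).card := by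
        refine card_le_card fun u hu => ?_
        obtain ⟨-, v, hv, huv⟩ := mem_inBoundary.1 hu
        exact mem_biUnion.2 ⟨v, hv, by simpa using huv⟩
    _ ≤ S.card * d := card_biUnion_le_card_mul _ _ _ fun v _ => by
        simpa [← Set.ncard_coe_finset] using hdeg v

theorem IsSuccClosed.not_rel_of_notMem_inBoundary {S : Finset V} (hS : IsSuccClosed E S)
    {u v : V} (huS : u ∉ S) (hu : u ∉ inBoundary E S) (hv : v ∈ S) : ¬ E u v ∧ ¬ E v u :=
  ⟨fun huv => hu (mem_inBoundary.2 ⟨huS, v, hv, huv⟩), fun hvu => huS (hS v hv u hvu)⟩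

end CausalCut

open CausalCut in
/-- Every finite DAG (a relation whose transitive closure is irreflexive) in which
every vertex has at most `d_m` parents admits a balanced causal cut. -/
theorem stmt_0 {V : Type*} [Fintype V] [DecidableEq V]
    (E : V → V → Prop) (d_m : ℕ)
    (hacyc : ∀ v : V, ¬ Relation.TransGen E v v)
    (hdeg : ∀ v : V, {u : V | E u v}.ncard ≤ d_m) :
    ∃ C V1 V2 : Finset V,
      Disjoint C V1 ∧ Disjoint C V2 ∧ Disjoint V1 V2 ∧
      C ∪ V1 ∪ V2 = Finset.univ ∧
      (∀ u ∈ V1, ∀ v ∈ V2, ¬ E u v ∧ ¬ E v u) ∧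
      Fintype.card V / (2 * d_m + 2) ≤ V1.card ∧
      Fintype.card V / (2 * d_m + 2) ≤ V2.card := by
  set n := Fintype.card V
  set k := n / (2 * d_m + 2)
  have hkn : k * (2 * d_m + 2) ≤ n := Nat.div_mul_le_self n _
  obtain ⟨S, hS, hScard⟩ := exists_isSuccClosed_card_eq hacyc k (Nat.div_le_self n _)
  set C := inBoundary E S
  have hCS : Disjoint C S := disjoint_left.2 fun _ hu => (mem_inBoundary.1 hu).1
  have hCcard : C.card ≤ k * d_m := hScard ▸ card_inBoundary_le hdeg S
  have hcover : C ∪ (S ∪ C)ᶜ ∪ S = univ := by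
    ext
    simp only [compl_union, mem_union, mem_inter, mem_compl, mem_univ, iff_true]
    tauto
  refine ⟨C, (S ∪ C)ᶜ, S, disjoint_compl_right.mono_left subset_union_right, hCS,
    disjoint_compl_left.mono_right subset_union_left, hcover, ?_, ?_, hScard.ge⟩
  · intro u hu v hv
    simp only [mem_compl, mem_union, not_or] at hu
    exact hS.not_rel_of_notMem_inBoundary hu.1 hu.2 hv
  · have := card_union_le S C
    have : k * (2 * d_m + 2) = 2 * (k * d_m) + 2 * k := by ring
    rw [card_compl]
    omega
end

section
/- Let G be a directed acyclic graph on n vertices and let v_1, …, v_n be a topological ordering of its vertices (for every edge v_i → v_j one has i < j). Fix indices 0 ≤ a < b ≤ n and define V1 = {v_i : a < i ≤ b}, C = {v_i : i ≤ a and v_i is a parent of some vertex of V1} ∪ {v_i : i > b}, and V2 = {v_i : i ≤ a} \ C. Then C, V1, V2 are pairwise disjoint, their union is the whole vertex set, and no edge of G joins a vertex of V1 and a vertex of V2 in either direction. -/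
/-- Taking an interval of a topological order as `V1` and collecting its parents
together with all later vertices into `C` yields a causal cut. -/
theorem stmt_1 (n : ℕ) (E : Fin n → Fin n → Prop)
    (htopo : ∀ i j : Fin n, E i j → i < j)
    (a b : ℕ) (hab : a < b) (hbn : b ≤ n) :
    let V1 : Set (Fin n) := {i | a ≤ (i : ℕ) ∧ (i : ℕ) < b}
    let C : Set (Fin n) :=
      {i | (i : ℕ) < a ∧ ∃ j ∈ V1, E i j} ∪ {i | b ≤ (i : ℕ)}
    let V2 : Set (Fin n) := {i | (i : ℕ) < a} \ C
    Disjoint C V1 ∧ Disjoint C V2 ∧ Disjoint V1 V2 ∧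
    C ∪ V1 ∪ V2 = Set.univ ∧
    ∀ u ∈ V1, ∀ w ∈ V2, ¬ E u w ∧ ¬ E w u := by
  intro V1 C V2
  refine ⟨?_, ?_, ?_, ?_, ?_⟩
  · rw [Set.disjoint_left]
    rintro x (⟨hx, _⟩ | hx) ⟨h1, h2⟩ <;> (try simp only [Set.mem_setOf_eq] at hx) <;> omega
  · exact Set.disjoint_sdiff_right
  · rw [Set.disjoint_left]
    rintro x ⟨h1, _⟩ hx2
    obtain ⟨h2, _⟩ := hx2
    simp only [Set.mem_setOf_eq] at h2
    omega
  · ext x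
    simp only [Set.mem_union, Set.mem_diff, Set.mem_setOf_eq, Set.mem_univ, iff_true, V1, C, V2]
    by_cases h : (x : ℕ) < a
    · by_cases h2 : x ∈ C
      · left; left; exact h2
      · right; exact ⟨h, h2⟩
    · left
      by_cases h3 : (x : ℕ) < b
      · right; exact ⟨by omega, h3⟩
      · left; right; omega
  · rintro u ⟨hu1, hu2⟩ w ⟨hw, hwC⟩
    constructor
    · intro hE
      have h := htopo u w hE
      rw [Fin.lt_def] at h
      simp only [Set.mem_diff, Set.mem_setOf_eq] at hw
      omega
    · intro hE
      exact hwC (Or.inl ⟨hw, u, ⟨hu1, hu2⟩, hE⟩)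
end

section
/- Let n1, n2 be positive natural numbers, n = n1 + n2, and N = n1·n2. Let e ≥ 0, f > 0, 0 ≤ β, and 0 ≤ α < 1 be real parameters and set q = e·β/(f·(1−α)). Then ∑_{i=0}^{N} i·C(N,i)·q^i ≤ (⌈n²·e·β/(4·f·(1−α))⌉ + 1) · ∑_{j=0}^{N} C(N,j)·q^j; that is, the expected value of the distribution on {0,…,N} with weights proportional to C(N,i)·q^i is at most ⌈n²·e·β/(4·f·(1−α))⌉ + 1. -/
/-- The expected number of undetected crossing edges (the mean of the distribution
on `{0,…,N}` with weights proportional to `C(N,i)·q^i`, `q = eβ/(f(1-α))`) is at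
most `⌈n²eβ/(4f(1-α))⌉ + 1` where `n = n1 + n2` and `N = n1·n2`. -/
theorem stmt_4 (n1 n2 : ℕ) (h1 : 0 < n1) (h2 : 0 < n2)
    (e f α β : ℝ) (he : 0 ≤ e) (hf : 0 < f) (hβ : 0 ≤ β)
    (hα0 : 0 ≤ α) (hα1 : α < 1) :
    let n := n1 + n2
    let N := n1 * n2
    let q := e * β / (f * (1 - α))
    ∑ i ∈ Finset.range (N + 1), (i : ℝ) * (N.choose i) * q ^ i ≤
      ((⌈(n : ℝ) ^ 2 * e * β / (4 * f * (1 - α))⌉₊ : ℝ) + 1) *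
        ∑ j ∈ Finset.range (N + 1), (N.choose j : ℝ) * q ^ j := by
  intro n N q
  have hα : 0 < 1 - α := by linarith
  have hq : 0 ≤ q := div_nonneg (mul_nonneg he hβ) (le_of_lt (mul_pos hf hα))
  have hNpos : 0 < N := Nat.mul_pos h1 h2
  have hN1 : N - 1 + 1 = N := Nat.succ_pred_eq_of_pos hNpos
  -- the weight sum
  have hsum2 : ∑ j ∈ Finset.range (N + 1), (N.choose j : ℝ) * q ^ j = (1 + q) ^ N := by
    rw [show (1 + q) = (q + 1) by ring, add_pow]
    refine Finset.sum_congr rfl fun j _ => ?_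
    ring
  have hsum2' : ∑ j ∈ Finset.range ((N-1) + 1), ((N-1).choose j : ℝ) * q ^ j
      = (1 + q) ^ (N - 1) := by
    rw [show (1 + q) = (q + 1) by ring, add_pow]
    refine Finset.sum_congr rfl fun j _ => ?_
    ring
  -- the weighted sum
  have hsum1 : ∑ i ∈ Finset.range (N + 1), (i : ℝ) * (N.choose i) * q ^ i
      = (N : ℝ) * q * (1 + q) ^ (N - 1) := by
    rw [Finset.sum_range_succ']
    simp only [Nat.cast_zero, zero_mul, pow_zero, mul_one, add_zero]
    have : ∀ k, ((k + 1 : ℕ) : ℝ) * (N.choose (k + 1)) * q ^ (k + 1)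
        = (N : ℝ) * q * (((N - 1).choose k : ℝ) * q ^ k) := by
      intro k
      have h := Nat.add_one_mul_choose_eq (N - 1) k
      rw [hN1] at h
      have h' : (N : ℝ) * ((N - 1).choose k : ℝ) = (N.choose (k + 1) : ℝ) * ((k : ℝ) + 1) := by
        exact_mod_cast congrArg (Nat.cast : ℕ → ℝ) h
      push_cast
      calc ((k : ℝ) + 1) * (N.choose (k + 1)) * q ^ (k + 1)
          = (N.choose (k + 1) : ℝ) * ((k : ℝ) + 1) * (q ^ k * q) := by ring
        _ = (N : ℝ) * ((N - 1).choose k : ℝ) * (q ^ k * q) := by rw [h']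
        _ = (N : ℝ) * q * (((N - 1).choose k : ℝ) * q ^ k) := by ring
    rw [Finset.sum_congr rfl (fun k _ => this k), ← Finset.mul_sum]
    rw [show Finset.range N = Finset.range ((N - 1) + 1) by rw [hN1], hsum2']
  rw [hsum1, hsum2]
  -- N * q ≤ ⌈x⌉ + 1 where x = n²eβ/(4f(1-α))
  set x : ℝ := (n : ℝ) ^ 2 * e * β / (4 * f * (1 - α)) with hx
  have hxq : (N : ℝ) * q ≤ x := by
    have hle : (4 : ℝ) * (N : ℝ) ≤ (n : ℝ) ^ 2 := by
      show (4 : ℝ) * ((n1 * n2 : ℕ) : ℝ) ≤ (((n1 + n2 : ℕ)) : ℝ) ^ 2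
      push_cast
      nlinarith [sq_nonneg ((n1 : ℝ) - (n2 : ℝ))]
    have hxeq : x = (n : ℝ) ^ 2 / 4 * q := by
      rw [hx]
      show _ = (n : ℝ) ^ 2 / 4 * (e * β / (f * (1 - α)))
      field_simp
    rw [hxeq]
    have : (N : ℝ) ≤ (n : ℝ) ^ 2 / 4 := by linarith
    exact mul_le_mul_of_nonneg_right this hq
  have hx0 : 0 ≤ x := le_trans (by positivity) hxq
  have hceil : x ≤ (⌈x⌉₊ : ℝ) := Nat.le_ceil x
  have hNq : (N : ℝ) * q ≤ (⌈x⌉₊ : ℝ) + 1 := by linarith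
  have hpow : (1 + q) ^ (N - 1) ≤ (1 + q) ^ N := by
    apply pow_le_pow_right₀ (by linarith) (Nat.sub_le N 1)
  have hpow0 : (0 : ℝ) ≤ (1 + q) ^ (N - 1) := by positivity
  calc (N : ℝ) * q * (1 + q) ^ (N - 1)
      ≤ ((⌈x⌉₊ : ℝ) + 1) * (1 + q) ^ (N - 1) := mul_le_mul_of_nonneg_right hNq hpow0
    _ ≤ ((⌈x⌉₊ : ℝ) + 1) * (1 + q) ^ N := by
        apply mul_le_mul_of_nonneg_left hpow (by positivity)
end

section
/- Let e1, e2, ec, f1, f2, fc be nonnegative reals with A := e1 + e2 + ec > 0 and F := f1 + f2 + fc, and let 0 ≤ r ≤ 1, R ≥ 0, δ ≥ 0 be reals with R + δ ≤ 1 and F·r > 0. Define P = A·R/(A·R + F·r), so 0 ≤ P < 1. Suppose R + δ ≤ R1 ≤ 1, R + δ ≤ R2 ≤ 1, 0 ≤ r1 ≤ r, 0 ≤ r2 ≤ r, and δ ≥ P·fc·(r − r²)/((1−P)·A). Let N_m = e1·R1 + e2·R2 + ec·(R1 + R2 − R1·R2) and F_m = f1·r1 + f2·r2 + fc·(r1 +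 r2 − r1·r2). If N_m + F_m > 0, then N_m/(N_m + F_m) ≥ P. -/
set_option maxHeartbeats 800000


/-- First alternative of the merge-precision lemma: a gain `δ` in recall on the
subproblems guarantees that the merged precision is at least `P`. -/
theorem stmt_6 (e1 e2 ec f1 f2 fc R r δ R1 R2 r1 r2 P : ℝ)
    (he1 : 0 ≤ e1) (he2 : 0 ≤ e2) (hec : 0 ≤ ec)
    (hf1 : 0 ≤ f1) (hf2 : 0 ≤ f2) (hfc : 0 ≤ fc)
    (hA : 0 < e1 + e2 + ec)
    (hr0 : 0 ≤ r) (hr1 : r ≤ 1) (hR : 0 ≤ R) (hδ0 : 0 ≤ δ) (hRδ : R + δ ≤ 1)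
    (hFr : 0 < (f1 + f2 + fc) * r)
    (hP : P = (e1 + e2 + ec) * R / ((e1 + e2 + ec) * R + (f1 + f2 + fc) * r))
    (hR1 : R + δ ≤ R1) (hR1le : R1 ≤ 1)
    (hR2 : R + δ ≤ R2) (hR2le : R2 ≤ 1)
    (hr10 : 0 ≤ r1) (hr1le : r1 ≤ r)
    (hr20 : 0 ≤ r2) (hr2le : r2 ≤ r)
    (hδge : δ ≥ P * fc * (r - r ^ 2) / ((1 - P) * (e1 + e2 + ec)))
    (hpos : 0 < (e1 * R1 + e2 * R2 + ec * (R1 + R2 - R1 * R2))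
        + (f1 * r1 + f2 * r2 + fc * (r1 + r2 - r1 * r2))) :
    P ≤ (e1 * R1 + e2 * R2 + ec * (R1 + R2 - R1 * R2)) /
        ((e1 * R1 + e2 * R2 + ec * (R1 + R2 - R1 * R2))
          + (f1 * r1 + f2 * r2 + fc * (r1 + r2 - r1 * r2))) := by
  set A := e1 + e2 + ec with hAdef
  set F := f1 + f2 + fc with hFdef
  have hAR : 0 ≤ A * R := mul_nonneg hA.le hR
  have hden : 0 < A * R + F * r := by linarith
  have hP0 : 0 ≤ P := by rw [hP]; exact div_nonneg hAR hden.le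
  have hP1 : P < 1 := by
    rw [hP]; rw [div_lt_one hden]; linarith
  have hkey : P * (F * r) = (1 - P) * (A * R) := by
    have : P * (A * R + F * r) = A * R := by
      rw [hP]; field_simp
    nlinarith [this]
  have hδ' : P * fc * (r - r ^ 2) ≤ (1 - P) * A * δ := by
    have h1P : 0 < (1 - P) * A := by
      apply mul_pos (by linarith) hA
    have := (div_le_iff₀ h1P).mp hδge
    nlinarith [this]
  set Nm := e1 * R1 + e2 * R2 + ec * (R1 + R2 - R1 * R2) with hNmdef
  set Fm := f1 * r1 + f2 * r2 + fc * (r1 + r2 - r1 * r2) with hFmdef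
  have hFm : Fm ≤ F * r + fc * (r - r ^ 2) := by
    have h1 : f1 * r1 ≤ f1 * r := mul_le_mul_of_nonneg_left hr1le hf1
    have h2 : f2 * r2 ≤ f2 * r := mul_le_mul_of_nonneg_left hr2le hf2
    have h3 : fc * (r1 + r2 - r1 * r2) ≤ fc * (2 * r - r ^ 2) := by
      apply mul_le_mul_of_nonneg_left _ hfc
      nlinarith [mul_nonneg (sub_nonneg.mpr hr1le) (sub_nonneg.mpr (hr2le.trans hr1)),
        mul_nonneg (sub_nonneg.mpr hr2le) (sub_nonneg.mpr hr1)]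
    simp only [hNmdef, hFmdef, hFdef]
    nlinarith [h1, h2, h3]
  have hNm : A * (R + δ) ≤ Nm := by
    have h1 : e1 * (R + δ) ≤ e1 * R1 := mul_le_mul_of_nonneg_left hR1 he1
    have h2 : e2 * (R + δ) ≤ e2 * R2 := mul_le_mul_of_nonneg_left hR2 he2
    have h3 : ec * (R + δ) ≤ ec * (R1 + R2 - R1 * R2) := by
      apply mul_le_mul_of_nonneg_left _ hec
      have hR2' : (0:ℝ) ≤ R2 := le_trans (by linarith) hR2
      nlinarith [mul_nonneg hR2' (sub_nonneg.mpr hR1le)]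
    simp only [hNmdef, hAdef]
    nlinarith [h1, h2, h3]
  rw [le_div_iff₀ hpos]
  have hNm0 : 0 ≤ Nm := le_trans (by nlinarith) hNm
  -- P * (Nm + Fm) ≤ Nm  ⟺  P * Fm ≤ (1 - P) * Nm
  have hPFm : P * Fm ≤ (1 - P) * Nm := by
    calc P * Fm ≤ P * (F * r + fc * (r - r ^ 2)) := mul_le_mul_of_nonneg_left hFm hP0
    _ = P * (F * r) + P * fc * (r - r ^ 2) := by ring
    _ ≤ (1 - P) * (A * R) + (1 - P) * A * δ := by linarith [hkey, hδ']
    _ = (1 - P) * (A * (R + δ)) := by ring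
    _ ≤ (1 - P) * Nm := mul_le_mul_of_nonneg_left hNm (by linarith)
  nlinarith [hPFm]
end

section
/- Let e1, e2, ec, f1, f2, fc be nonnegative reals with F2 := f1 + f2 + 2·fc > 0, and set A := e1 + e2 + ec and F := f1 + f2 + fc. Let 0 ≤ R ≤ 1, r ≥ 0, and γ ≥ 0 with γ ≤ r, and assume A·R + F·r > 0; define P = A·R/(A·R + F·r). Suppose R ≤ R1 ≤ 1, R ≤ R2 ≤ 1, 0 ≤ r1 ≤ r − γ, 0 ≤ r2 ≤ r − γ, and γ ≥ fc·r/F2. Let N_m = e1·R1 + e2·R2 + ec·(R1 + R2 − R1·R2) and F_m = f1·r1 + f2·r2 + fc·(r1 + r2 − r1·r2). If N_m + F_m > 0, then N_m/(N_m + F_m) ≥ P. -/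
/-- Second alternative of the merge-precision lemma: a reduction `γ` in the
false-discovery probability on the subproblems guarantees that the merged
precision is at least `P`. -/
theorem stmt_7 (e1 e2 ec f1 f2 fc R r γ R1 R2 r1 r2 P : ℝ)
    (he1 : 0 ≤ e1) (he2 : 0 ≤ e2) (hec : 0 ≤ ec)
    (hf1 : 0 ≤ f1) (hf2 : 0 ≤ f2) (hfc : 0 ≤ fc)
    (hF2 : 0 < f1 + f2 + 2 * fc)
    (hR0 : 0 ≤ R) (hRle : R ≤ 1) (hr0 : 0 ≤ r)
    (hγ0 : 0 ≤ γ) (hγr : γ ≤ r)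
    (hden : 0 < (e1 + e2 + ec) * R + (f1 + f2 + fc) * r)
    (hP : P = (e1 + e2 + ec) * R / ((e1 + e2 + ec) * R + (f1 + f2 + fc) * r))
    (hR1 : R ≤ R1) (hR1le : R1 ≤ 1)
    (hR2 : R ≤ R2) (hR2le : R2 ≤ 1)
    (hr10 : 0 ≤ r1) (hr1le : r1 ≤ r - γ)
    (hr20 : 0 ≤ r2) (hr2le : r2 ≤ r - γ)
    (hγge : γ ≥ fc * r / (f1 + f2 + 2 * fc))
    (hpos : 0 < (e1 * R1 + e2 * R2 + ec * (R1 + R2 - R1 * R2))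
        + (f1 * r1 + f2 * r2 + fc * (r1 + r2 - r1 * r2))) :
    P ≤ (e1 * R1 + e2 * R2 + ec * (R1 + R2 - R1 * R2)) /
        ((e1 * R1 + e2 * R2 + ec * (R1 + R2 - R1 * R2))
          + (f1 * r1 + f2 * r2 + fc * (r1 + r2 - r1 * r2))) := by
  have hkey : fc * r ≤ γ * (f1 + f2 + 2 * fc) := (div_le_iff₀ hF2).mp hγge
  have hN : (e1 + e2 + ec) * R ≤ e1 * R1 + e2 * R2 + ec * (R1 + R2 - R1 * R2) := by
    nlinarith [mul_nonneg he1 (sub_nonneg.2 hR1), mul_nonneg he2 (sub_nonneg.2 hR2),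
      mul_nonneg hec (sub_nonneg.2 hR1),
      mul_nonneg hec (mul_nonneg (hR0.trans hR2) (sub_nonneg.2 hR1le))]
  have hF : f1 * r1 + f2 * r2 + fc * (r1 + r2 - r1 * r2) ≤ (f1 + f2 + fc) * r := by
    nlinarith [mul_nonneg hfc (mul_nonneg hr10 hr20),
      mul_nonneg hf1 (sub_nonneg.2 hr1le), mul_nonneg hf2 (sub_nonneg.2 hr2le),
      mul_nonneg hfc (sub_nonneg.2 hr1le), mul_nonneg hfc (sub_nonneg.2 hr2le)]
  have hAR : 0 ≤ (e1 + e2 + ec) * R := mul_nonneg (by linarith) hR0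
  have hFr : 0 ≤ (f1 + f2 + fc) * r := mul_nonneg (by linarith) hr0
  rw [hP, div_le_div_iff₀ hden hpos]
  nlinarith [mul_le_mul_of_nonneg_left hF hAR, mul_le_mul_of_nonneg_right hN hFr]
end

section
/- Let n and n_c be positive natural numbers, let d > 0, f > 0, e > 0, r ≥ 0, β ≥ 0, ε ≥ 0 be reals, and let 0 ≤ α < 1. Set K1 = ⌈n²·e·β/(4·f·(1−α))⌉ + 1 and K2 = (ε + β)·n_c·(2·n_c·r + (d²/n)·(1 + d/n)^{n−2}). Let R ≥ 0 and δ ≥ 0 satisfy R + δ ≤ 1 and δ ≥ (K1 + K2)/e. Suppose e1, e2, ec, e_ce are nonnegative reals with e1 + e2 + ec + e_ce = e and e_ce ≤ K1, that R + δ ≤ R1 ≤ 1 and R + δ ≤ R2 ≤ 1, and that e_co, e_re are nonnegative reals with e_co + e_re ≤ K2. Then (e1·R1 + e2·R2 + ec·(R1 + R2 − R1·R2) − e_co − e_re)/e ≥ R. -/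
/-- Deterministic skeleton of the SADA recall guarantee (Theorem 3):
if `δ ≥ (K1 + K2)/e` then the expected recall after merging, conflict removal
and redundancy removal is at least `R`. -/
theorem stmt_11 (n n_c : ℕ) (hn : 0 < n) (hnc : 0 < n_c)
    (d f e r β ε α : ℝ)
    (hd : 0 < d) (hf : 0 < f) (he : 0 < e) (hr : 0 ≤ r) (hβ : 0 ≤ β)
    (hε : 0 ≤ ε) (hα0 : 0 ≤ α) (hα1 : α < 1)
    (R δ : ℝ) (hR : 0 ≤ R) (hδ0 : 0 ≤ δ) (hRδ : R + δ ≤ 1)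
    (K1 K2 : ℝ)
    (hK1 : K1 = (⌈(n : ℝ) ^ 2 * e * β / (4 * f * (1 - α))⌉₊ : ℝ) + 1)
    (hK2 : K2 = (ε + β) * (n_c : ℝ) *
        (2 * (n_c : ℝ) * r + d ^ 2 / (n : ℝ) * (1 + d / (n : ℝ)) ^ (n - 2)))
    (hδ : δ ≥ (K1 + K2) / e)
    (e1 e2 ec e_ce : ℝ)
    (he1 : 0 ≤ e1) (he2 : 0 ≤ e2) (hec : 0 ≤ ec) (hece0 : 0 ≤ e_ce)
    (hsum : e1 + e2 + ec + e_ce = e) (hece : e_ce ≤ K1)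
    (R1 R2 : ℝ) (hR1 : R + δ ≤ R1) (hR1le : R1 ≤ 1)
    (hR2 : R + δ ≤ R2) (hR2le : R2 ≤ 1)
    (e_co e_re : ℝ) (hco : 0 ≤ e_co) (hre : 0 ≤ e_re)
    (hcore : e_co + e_re ≤ K2) :
    R ≤ (e1 * R1 + e2 * R2 + ec * (R1 + R2 - R1 * R2) - e_co - e_re) / e := by
  have hδe : K1 + K2 ≤ e * δ := by
    rw [ge_iff_le, div_le_iff₀ he] at hδ; linarith
  have hRδ0 : 0 ≤ R + δ := by linarith
  have h3 : R + δ ≤ R1 + R2 - R1 * R2 := by nlinarith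
  rw [le_div_iff₀ he]
  nlinarith [mul_le_mul_of_nonneg_left hR1 he1, mul_le_mul_of_nonneg_left hR2 he2,
    mul_le_mul_of_nonneg_left h3 hec, mul_le_mul hece hRδ hRδ0 (by rw [hK1]; positivity),
    mul_le_mul_of_nonneg_left hRδ hece0, mul_le_mul_of_nonneg_right hece hRδ0]
end
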